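/- arXiv:math/0203104 — 3 statements merged into one kernel-verified Lean document; each statement's English description precedes it below -/
import Mathlib

section
/- For every k ≥ 2 and every n ≥ 1, the generalized Lucas polynomial G_n lies in the kernel of T_1: (∂/∂t₁)²G_n − Σ_{j=1}^k t_j·(∂/∂t₂)(∂/∂t_j)G_n − (∂/∂t₂)G_n = 0. -/
open MvPolynomial Finset

/-- The weight coefficient `A_ω(α)` of Theorem 2.1 (for `α ≠ 0`):
`A_ω(α) = multinomial(α) · (Σ α_i ω_i) / (Σ α_i)`. -/
noncomputable def Aw {k : ℕ} (ω : Fin k → ℝ) (α : Fin k → ℕ) : ℝ :=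
  (Nat.multinomial Finset.univ α : ℝ) * (∑ i, (α i : ℝ) * ω i) / (∑ i, (α i : ℝ))

/-- The isobaric degree `Σ_{i=1}^k i·α_i` of an exponent vector. -/
def isoDeg {k : ℕ} (α : Fin k → ℕ) : ℕ := ∑ i, (i.1 + 1) * α i

/-- The (finite) set of exponent vectors of isobaric degree `n`. -/
def wipIndex (k n : ℕ) : Finset (Fin k → ℕ) :=
  (Fintype.piFinset fun _ : Fin k => Finset.range (n + 1)).filter fun α => isoDeg α = n

/-- The weighted isobaric polynomial `P_{n,ω} = Σ_α A_ω(α)·t^α`. -/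
noncomputable def WIP (k n : ℕ) (ω : Fin k → ℝ) : MvPolynomial (Fin k) ℝ :=
  ∑ α ∈ wipIndex k n, MvPolynomial.monomial (Finsupp.equivFunOnFinite.symm α) (Aw ω α)

/-- The operator `T_m(P) = D₁₁P − Σ_j t_j D_{2j}P − m·D₂P`. -/
noncomputable def Tm (k : ℕ) (hk : 2 ≤ k) (m : ℝ) (P : MvPolynomial (Fin k) ℝ) :
    MvPolynomial (Fin k) ℝ :=
  pderiv (⟨0, by omega⟩ : Fin k) (pderiv (⟨0, by omega⟩ : Fin k) P)
    - ∑ j : Fin k, X j * pderiv (⟨1, by omega⟩ : Fin k) (pderiv j P)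
    - C m * pderiv (⟨1, by omega⟩ : Fin k) P

/-- The `j`-th element `γ^{(j)}` of the string generated by `γ`. -/
def strElem (k : ℕ) (hk : 2 ≤ k) (γ : Fin k → ℕ) (j : ℕ) : Fin k → ℕ :=
  fun i => if i = (⟨0, by omega⟩ : Fin k) then γ i + 2 * j
    else if i = (⟨1, by omega⟩ : Fin k) then γ i - j else γ i

/-- The `ω`-weighted string generated by `γ`:
`S_ω(γ) = Σ_{j=0}^{γ₂} A_ω(γ^{(j)})·t^{γ^{(j)}}`. -/
noncomputable def strPoly (k : ℕ) (hk : 2 ≤ k) (ω : Fin k → ℝ) (γ : Fin k → ℕ) :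
    MvPolynomial (Fin k) ℝ :=
  ∑ j ∈ Finset.range (γ (⟨1, by omega⟩ : Fin k) + 1),
    MvPolynomial.monomial (Finsupp.equivFunOnFinite.symm (strElem k hk γ j))
      (Aw ω (strElem k hk γ j))

/-- The generalized Lucas polynomial `G_n = P_{n,ν}`, `ν_i = i`. -/
noncomputable def Gpoly (k n : ℕ) : MvPolynomial (Fin k) ℝ :=
  WIP k n (fun i => (i.1 + 1 : ℝ))

/-! Compare coefficients of `t^d`. Partial derivatives commute, and by Euler's identity
`Σ_j t_j ∂_j` multiplies the coefficient at `d` by the total degree `|d|`; so the coefficient of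
`T_m P` at `d` is `(∂₁²P)_d − (|d| + m)·(∂₂P)_d`. For the weight `ν_i = i` the numerator `Σ α_i ν_i` of
`A_ν(α)` is the isobaric degree of `α`, and the recursion
`(d_i + 1)·multinomial(d + e_i) = (|d| + 1)·multinomial(d)` gives `(∂_i G_n)_d = n·multinomial(d)`
when `d + e_i` has isobaric degree `n` (and `0` otherwise). Hence both terms of `(T₁ G_n)_d` equal
`n·(|d| + 1)·multinomial(d)`. -/

namespace MvPolynomial

variable {σ R : Type*} [CommSemiring R]

theorem pderiv_comm (i j : σ) (p : MvPolynomial σ R) :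
    pderiv i (pderiv j p) = pderiv j (pderiv i p) := by
  classical
  rcases eq_or_ne i j with rfl | hij
  · rfl
  ext m
  simp only [coeff_pderiv, add_right_comm m (Finsupp.single i 1), Finsupp.add_apply,
    Finsupp.single_eq_of_ne hij, Finsupp.single_eq_of_ne hij.symm, add_zero]
  ring

theorem coeff_X_mul_pderiv (i : σ) (d : σ →₀ ℕ) (p : MvPolynomial σ R) :
    coeff d (X i * pderiv i p) = d i * coeff d p := by
  classical
  induction p using MvPolynomial.induction_on' with
  | add p q hp hq => simp only [mul_add, map_add, coeff_add, hp, hq]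
  | monomial m r =>
    rw [X_mul_pderiv_monomial, coeff_smul, coeff_monomial]
    split_ifs with h <;> simp [h]

theorem coeff_sum_X_mul_pderiv [Fintype σ] (d : σ →₀ ℕ) (p : MvPolynomial σ R) :
    coeff d (∑ i, X i * pderiv i p) = (∑ i, (d i : R)) * coeff d p := by
  simp only [coeff_sum, coeff_X_mul_pderiv, Finset.sum_mul]

end MvPolynomial

theorem Nat.succ_mul_multinomial_add_single {α : Type*} [DecidableEq α] {s : Finset α}
    {a : α} (ha : a ∈ s) (f : α → ℕ) :
    (f a + 1) * multinomial s (f + Pi.single a 1 : α → ℕ)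
      = (∑ i ∈ s, f i + 1) * multinomial s f := by
  have ha' := Finset.notMem_erase a s
  have hrest : ∀ i ∈ s.erase a, (f + Pi.single a 1 : α → ℕ) i = f i := fun i hi => by
    simp [(Finset.mem_erase.1 hi).1]
  rw [← Finset.insert_erase ha, multinomial_insert ha', multinomial_insert ha',
    multinomial_congr hrest, Finset.sum_congr rfl hrest, Finset.sum_insert ha']
  simp only [Pi.add_apply, Pi.single_eq_same]
  rw [← mul_assoc, ← mul_assoc, show f a + 1 + ∑ i ∈ s.erase a, f i
    = f a + ∑ i ∈ s.erase a, f i + 1 by ring, add_one_mul_choose_eq, mul_comm (f a + 1)]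

theorem coeff_Tm (k : ℕ) (hk : 2 ≤ k) (m : ℝ) (P : MvPolynomial (Fin k) ℝ) (d : Fin k →₀ ℕ) :
    coeff d (Tm k hk m P)
      = coeff d (pderiv ⟨0, by omega⟩ (pderiv ⟨0, by omega⟩ P))
        - ((∑ j, (d j : ℝ)) + m) * coeff d (pderiv ⟨1, by omega⟩ P) := by
  have hcomm : ∑ j, X j * pderiv ⟨1, by omega⟩ (pderiv j P)
      = ∑ j, X j * pderiv j (pderiv ⟨1, by omega⟩ P) :=
    Finset.sum_congr rfl fun j _ => by rw [pderiv_comm]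
  rw [Tm, hcomm, coeff_sub, coeff_sub, coeff_sum_X_mul_pderiv, coeff_C_mul]
  ring

theorem mem_wipIndex {k n : ℕ} {α : Fin k → ℕ} : α ∈ wipIndex k n ↔ isoDeg α = n := by
  refine ⟨fun h => (Finset.mem_filter.1 h).2, fun h => Finset.mem_filter.2 ⟨?_, h⟩⟩
  refine Fintype.mem_piFinset.2 fun i => Finset.mem_range_succ_iff.2 ?_
  calc α i ≤ (i.1 + 1) * α i := Nat.le_mul_of_pos_left _ i.1.succ_pos
    _ ≤ isoDeg α := Finset.single_le_sum (f := fun j : Fin k => (j.1 + 1) * α j)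
        (fun _ _ => Nat.zero_le _) (Finset.mem_univ i)
    _ = n := h

theorem coeff_WIP (k n : ℕ) (ω : Fin k → ℝ) (d : Fin k →₀ ℕ) :
    coeff d (WIP k n ω) = if isoDeg ⇑d = n then Aw ω ⇑d else 0 := by
  classical
  have hd : ∀ α : Fin k → ℕ, Finsupp.equivFunOnFinite.symm α = d ↔ α = ⇑d :=
    fun α => Equiv.symm_apply_eq _
  simp only [WIP, coeff_sum, coeff_monomial, hd, Finset.sum_ite_eq', mem_wipIndex]

theorem isoDeg_add_single {k : ℕ} (α : Fin k → ℕ) (i : Fin k) :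
    isoDeg (α + Pi.single i 1) = isoDeg α + (i.1 + 1) := by
  simp [isoDeg, mul_add, Finset.sum_add_distrib, Pi.single_apply]

theorem Aw_succ_weight {k : ℕ} (α : Fin k → ℕ) :
    Aw (fun i => (i.1 + 1 : ℝ)) α
      = Nat.multinomial Finset.univ α * isoDeg α / ∑ i, (α i : ℝ) := by
  simp only [Aw, isoDeg, Nat.cast_sum, Nat.cast_mul, Nat.cast_add, Nat.cast_one, mul_comm]

theorem coeff_pderiv_Gpoly (k n : ℕ) (i : Fin k) (d : Fin k →₀ ℕ) :
    coeff d (pderiv i (Gpoly k n))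
      = if isoDeg ⇑d + (i.1 + 1) = n then (Nat.multinomial Finset.univ ⇑d : ℝ) * n else 0 := by
  classical
  rw [coeff_pderiv, Gpoly, coeff_WIP, Finsupp.coe_add, Finsupp.single_eq_pi_single,
    isoDeg_add_single]
  split_ifs with h
  · have hmult := congrArg (Nat.cast (R := ℝ))
      (Nat.succ_mul_multinomial_add_single (Finset.mem_univ i) ⇑d)
    have hsum : ∑ j, ((⇑d + Pi.single i 1 : Fin k → ℕ) j : ℝ) = ∑ j, (d j : ℝ) + 1 := by
      simp [Finset.sum_add_distrib, Pi.single_apply]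
    push_cast at hmult
    rw [Aw_succ_weight, isoDeg_add_single, h, hsum]
    field_simp
    linear_combination (n : ℝ) * hmult
  · rw [zero_mul]

theorem lucas_in_ker_T1_general (k : ℕ) (hk : 2 ≤ k) (n : ℕ) :
    Tm k hk 1 (Gpoly k n) = 0 := by
  ext d
  have hmult := congrArg (Nat.cast (R := ℝ))
    (Nat.succ_mul_multinomial_add_single (Finset.mem_univ (⟨0, by omega⟩ : Fin k)) ⇑d)
  push_cast at hmult
  rw [coeff_Tm, coeff_zero, coeff_pderiv, coeff_pderiv_Gpoly, coeff_pderiv_Gpoly,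
    Finsupp.coe_add, Finsupp.single_eq_pi_single, isoDeg_add_single]
  simp only [zero_add, add_assoc, Nat.reduceAdd]
  split_ifs
  · linear_combination (n : ℝ) * hmult
  · ring

/-- For every `k ≥ 2` and `n ≥ 1`, the generalized Lucas polynomial `G_n`
lies in the kernel of `T_1`. -/
theorem lucas_in_ker_T1 (k : ℕ) (hk : 2 ≤ k) (n : ℕ) (hn : 1 ≤ n) :
    Tm k hk 1 (Gpoly k n) = 0 :=
  lucas_in_ker_T1_general k hk n
end

section
/- Let k ≥ 2, let 𝟙 be the constant weight vector with 𝟙_i = 1 for all i, and let γ : Fin k → ℕ be a string generator with γ₁ ∈ {0,1}. Then the 𝟙-weighted string satisfies T_2(S_𝟙(γ)) = 0. (Every string belonging to a generalized Fibonacci polynomial F_n is annihilated by T_2.) -/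
open MvPolynomial Finset

/-!
On a monomial, `T₂(c·t^d) = c·d₁(d₁-1)·t^(d-2e₁) - c·d₂(|d|+1)·t^(d-e₂)`, the second part by
Euler's identity for `∂₂ t^d`, which is homogeneous of degree `|d|-1`. Consecutive elements of a
string are `h + e₂` and `h + 2e₁` for a common `h`, so the first part of the term `j + 1` of
`T₂ S_𝟙(γ)` and the second part of the term `j` are multiples of `t^h`; they cancel because both
coefficients equal `(|h|+2)! / ∏ hᵢ!`. The sum telescopes, and its two ends vanish because
`γ₁ ≤ 1` and the last element of the string has no `t₂`.
-/

namespace MvPolynomial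

variable {σ R : Type*} [CommSemiring R]

theorem pderiv_monomial_add_single (i : σ) (d : σ →₀ ℕ) (c : R) :
    pderiv i (monomial (d + Finsupp.single i 1) c) = monomial d (c * (d i + 1)) := by
  simp

theorem pderiv_monomial_of_apply_eq_zero {i : σ} {d : σ →₀ ℕ} (h : d i = 0) (c : R) :
    pderiv i (monomial d c) = 0 := by
  simp [h]

theorem pderiv_pderiv_monomial_of_apply_le_one {i : σ} {d : σ →₀ ℕ} (h : d i ≤ 1) (c : R) :
    pderiv i (pderiv i (monomial d c)) = 0 := by
  rcases Nat.le_one_iff_eq_zero_or_eq_one.1 h with h | h <;> simp [h]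

theorem sum_X_mul_pderiv_monomial [Fintype σ] (d : σ →₀ ℕ) (c : R) :
    ∑ i, X i * pderiv i (monomial d c) = monomial d (c * ∑ i, (d i : R)) := by
  simp only [X_mul_pderiv_monomial, smul_monomial, nsmul_eq_mul, ← map_sum, ← Finset.sum_mul,
    mul_comm c]

end MvPolynomial

theorem Finset.sum_range_succ_sub_eq_zero {M : Type*} [AddCommGroup M] (u v : ℕ → M) (n : ℕ)
    (h₀ : u 0 = 0) (hn : v n = 0) (h : ∀ j < n, u (j + 1) = v j) :
    ∑ j ∈ range (n + 1), (u j - v j) = 0 := by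
  rw [sum_sub_distrib, sum_range_succ', sum_range_succ, h₀, hn,
    sum_congr rfl fun j hj => h j (mem_range.1 hj)]
  simp

theorem Fintype.sum_add_pi_single {ι M : Type*} [Fintype ι] [DecidableEq ι] [AddCommMonoid M]
    (f : ι → M) (p : ι) (a : M) :
    ∑ i, (f + Pi.single p a : ι → M) i = ∑ i, f i + a := by
  simp [Finset.sum_add_distrib]

theorem Finsupp.equivFunOnFinite_symm_add_single {ι M : Type*} [Finite ι] [DecidableEq ι]
    [AddZeroClass M] (f : ι → M) (i : ι) (a : M) :
    equivFunOnFinite.symm (f + Pi.single i a) = equivFunOnFinite.symm f + single i a := by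
  ext j
  simp [Pi.single_apply, single_apply, eq_comm]

namespace Nat

variable {ι : Type*} [Fintype ι] [DecidableEq ι]

theorem succ_mul_multinomial_add_single_s4 (f : ι → ℕ) (p : ι) :
    (f p + 1) * multinomial univ (f + Pi.single p 1) = (∑ i, f i + 1) * multinomial univ f := by
  have hprod : ∏ i, ((f + Pi.single p 1 : ι → ℕ) i)! = (f p + 1) * ∏ i, (f i)! := by
    rw [← Finset.mul_prod_erase univ _ (mem_univ p), ← Finset.mul_prod_erase univ _ (mem_univ p),
      ← mul_assoc]
    congr 1
    · simp [Nat.factorial_succ]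
    · refine Finset.prod_congr rfl fun i hi => ?_
      simp [Pi.single_eq_of_ne (Finset.ne_of_mem_erase hi)]
  have hspec := multinomial_spec univ (f + Pi.single p 1)
  rw [hprod, Fintype.sum_add_pi_single, factorial_succ, ← multinomial_spec univ f] at hspec
  have hpos : 0 < ∏ i, (f i)! := Finset.prod_pos fun i _ => factorial_pos _
  apply Nat.eq_of_mul_eq_mul_left hpos
  linarith

theorem multinomial_add_single_add_single_mul (f : ι → ℕ) (p q : ι) :
    multinomial univ (f + Pi.single p 1 + Pi.single p 1) * ((f p + 1) * (f p + 2))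
      = multinomial univ (f + Pi.single q 1) * ((f q + 1) * (∑ i, f i + 2)) := by
  have hp₁ := succ_mul_multinomial_add_single_s4 f p
  have hp₂ := succ_mul_multinomial_add_single_s4 (f + Pi.single p 1) p
  have hq := succ_mul_multinomial_add_single_s4 f q
  rw [Fintype.sum_add_pi_single, Pi.add_apply, Pi.single_eq_same] at hp₂
  calc _ = (f p + 1) * ((f p + 1 + 1) * multinomial univ (f + Pi.single p 1 + Pi.single p 1)) := by
        ring
    _ = (∑ i, f i + 2) * ((f q + 1) * multinomial univ (f + Pi.single q 1)) := by
        rw [hp₂, mul_left_comm, hp₁, hq]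
    _ = _ := by ring

end Nat

theorem Aw_one {k : ℕ} {α : Fin k → ℕ} (h : ∑ i, α i ≠ 0) :
    Aw (fun _ => 1) α = Nat.multinomial univ α := by
  have h' : (∑ i, (α i : ℝ)) ≠ 0 := by exact_mod_cast h
  simp only [Aw, mul_one]
  field_simp

noncomputable def fibMonomial {k : ℕ} (α : Fin k → ℕ) : MvPolynomial (Fin k) ℝ :=
  monomial (Finsupp.equivFunOnFinite.symm α) (Aw (fun _ => 1) α)

section

variable {k : ℕ}

theorem fibMonomial_add_single (h : Fin k → ℕ) (p : Fin k) :
    fibMonomial (h + Pi.single p 1)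
      = monomial (Finsupp.equivFunOnFinite.symm h + Finsupp.single p 1)
          (Nat.multinomial univ (h + Pi.single p 1) : ℝ) := by
  rw [fibMonomial, Finsupp.equivFunOnFinite_symm_add_single,
    Aw_one (by rw [Fintype.sum_add_pi_single]; omega)]

theorem pderiv_pderiv_fibMonomial_add_single_add_single (h : Fin k → ℕ) (p : Fin k) :
    pderiv p (pderiv p (fibMonomial (h + Pi.single p 1 + Pi.single p 1)))
      = monomial (Finsupp.equivFunOnFinite.symm h)
          ((Nat.multinomial univ (h + Pi.single p 1 + Pi.single p 1)
            * ((h p + 1) * (h p + 2)) : ℕ) : ℝ) := by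
  rw [fibMonomial_add_single, Finsupp.equivFunOnFinite_symm_add_single,
    pderiv_monomial_add_single, pderiv_monomial_add_single]
  simp only [Finsupp.add_apply, Finsupp.single_eq_same, Finsupp.coe_equivFunOnFinite_symm]
  push_cast
  congr 1
  ring

theorem sum_X_mul_pderiv_pderiv_add_C_two_mul_pderiv_fibMonomial_add_single
    (h : Fin k → ℕ) (q : Fin k) :
    ∑ j, X j * pderiv j (pderiv q (fibMonomial (h + Pi.single q 1)))
        + C 2 * pderiv q (fibMonomial (h + Pi.single q 1))
      = monomial (Finsupp.equivFunOnFinite.symm h)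
          ((Nat.multinomial univ (h + Pi.single q 1) * ((h q + 1) * (∑ i, h i + 2)) : ℕ) : ℝ) := by
  rw [fibMonomial_add_single, pderiv_monomial_add_single, sum_X_mul_pderiv_monomial,
    C_mul_monomial, ← map_add]
  simp only [Finsupp.coe_equivFunOnFinite_symm]
  push_cast
  congr 1
  ring

end

section

variable (k : ℕ) (hk : 2 ≤ k)

theorem Tm_sum (m : ℝ) {ι : Type*} (s : Finset ι) (f : ι → MvPolynomial (Fin k) ℝ) :
    Tm k hk m (∑ x ∈ s, f x) = ∑ x ∈ s, Tm k hk m (f x) := by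
  simp only [Tm, map_sum, mul_sum, sum_sub_distrib]
  rw [sum_comm]

theorem Tm_eq (m : ℝ) (P : MvPolynomial (Fin k) ℝ) :
    Tm k hk m P = pderiv ⟨0, by omega⟩ (pderiv ⟨0, by omega⟩ P)
      - (∑ j, X j * pderiv j (pderiv ⟨1, by omega⟩ P) + C m * pderiv ⟨1, by omega⟩ P) := by
  simp only [Tm, pderiv_comm _ (⟨1, by omega⟩ : Fin k), sub_sub]

variable (γ : Fin k → ℕ)

theorem strPoly_one_eq_sum_fibMonomial :
    strPoly k hk (fun _ => 1) γ
      = ∑ j ∈ range (γ ⟨1, by omega⟩ + 1), fibMonomial (strElem k hk γ j) :=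
  rfl

theorem exists_strElem_eq_add_single {j : ℕ} (hj : j < γ ⟨1, by omega⟩) :
    ∃ h : Fin k → ℕ, strElem k hk γ j = h + Pi.single ⟨1, by omega⟩ 1
      ∧ strElem k hk γ (j + 1) = h + Pi.single ⟨0, by omega⟩ 1 + Pi.single ⟨0, by omega⟩ 1 := by
  refine ⟨strElem k hk γ j - Pi.single ⟨1, by omega⟩ 1, ?_, ?_⟩ <;>
  · funext i
    simp only [strElem, Pi.add_apply, Pi.sub_apply, Pi.single_apply]
    split_ifs <;> subst_vars <;> simp_all [Fin.ext_iff] <;> omega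

end

/-- Every string belonging to a generalized Fibonacci polynomial (i.e. weighted by
the unit weight vector `𝟙`) is annihilated by `T_2`. -/
theorem fib_string_in_ker_T2 (k : ℕ) (hk : 2 ≤ k) (γ : Fin k → ℕ)
    (hγ : γ (⟨0, by omega⟩ : Fin k) = 0 ∨ γ (⟨0, by omega⟩ : Fin k) = 1) :
    Tm k hk 2 (strPoly k hk (fun _ => 1) γ) = 0 := by
  rw [strPoly_one_eq_sum_fibMonomial, Tm_sum]
  simp only [Tm_eq]
  refine sum_range_succ_sub_eq_zero _ _ _ ?_ ?_ fun j hj => ?_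
  · refine pderiv_pderiv_monomial_of_apply_le_one ?_ _
    simp only [Finsupp.coe_equivFunOnFinite_symm, strElem, if_pos]
    omega
  · rw [fibMonomial, pderiv_monomial_of_apply_eq_zero, mul_zero, add_zero]
    · simp
    · simp [strElem, Fin.ext_iff]
  · obtain ⟨h, hj₀, hj₁⟩ := exists_strElem_eq_add_single k hk γ hj
    rw [hj₀, hj₁, pderiv_pderiv_fibMonomial_add_single_add_single,
      sum_X_mul_pderiv_pderiv_add_C_two_mul_pderiv_fibMonomial_add_single,
      Nat.multinomial_add_single_add_single_mul _ _ ⟨1, by omega⟩]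
end

section
/- Let k ≥ 3 and m : ℝ with m ≠ 1 and m ≠ 2. If ω : Fin k → ℝ is a weight vector such that T_m(P_{n,ω}) = 0 for all n ≥ 1, then ω = 0. (The kernel of T_m acting on the WIP-module is zero when m ∉ {1,2}.) -/
open MvPolynomial Finset

/-! Only a few coefficients of `T_m(P_{n,ω})` are needed. The constant term of `T_m P_2` and the
`t₁`-coefficient of `T_m P_3` give `2ω₁ = mω₂` and `(5 - m)ω₁ = (1 + m)ω₂`, a linear system of
determinant `-(m - 1)(m - 2)`, so `ω₁ = ω₂ = 0`. For `i ≥ 3`, the `t_i`-coefficient of `T_m P_{i+2}`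
then reduces to `(1 - m)ω_i = 0`. -/

section IsobaricDegree

variable {k : ℕ}

lemma isoDeg_add (α β : Fin k → ℕ) : isoDeg (α + β) = isoDeg α + isoDeg β := by
  simp only [isoDeg, Pi.add_apply, mul_add, Finset.sum_add_distrib]

lemma isoDeg_single (a : Fin k) (p : ℕ) : isoDeg (Pi.single a p) = (a.1 + 1) * p := by
  simp [isoDeg, Pi.single_apply]

lemma le_isoDeg (α : Fin k → ℕ) (i : Fin k) : α i ≤ isoDeg α :=
  calc α i ≤ (i.1 + 1) * α i := Nat.le_mul_of_pos_left _ i.1.succ_pos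
    _ ≤ isoDeg α := Finset.single_le_sum (f := fun j : Fin k => (j.1 + 1) * α j)
        (fun _ _ => Nat.zero_le _) (Finset.mem_univ i)

end IsobaricDegree

lemma coeff_WIP_of_isoDeg_eq {k n : ℕ} (ω : Fin k → ℝ) {d : Fin k →₀ ℕ} (hd : isoDeg ⇑d = n) :
    coeff d (WIP k n ω) = Aw ω d := by
  rw [WIP, coeff_sum, Finset.sum_eq_single (⇑d)]
  · simp [coeff_monomial]
  · intro α _ hα
    rw [coeff_monomial, if_neg]
    rintro rfl
    exact hα rfl
  · intro hnot
    refine absurd ?_ hnot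
    simp only [wipIndex, Finset.mem_filter, Fintype.mem_piFinset, Finset.mem_range]
    exact ⟨fun i => Nat.lt_succ_of_le (hd ▸ le_isoDeg _ i), hd⟩

section WeightCoefficient

variable {k : ℕ} (ω : Fin k → ℝ)

lemma Aw_single (a : Fin k) {p : ℕ} (hp : p ≠ 0) : Aw ω (Pi.single a p) = ω a := by
  have : (p : ℝ) ≠ 0 := by exact_mod_cast hp
  simp only [Aw, Nat.multinomial_single, Pi.single_apply, Nat.cast_ite, Nat.cast_zero, ite_mul,
    zero_mul, Finset.sum_ite_eq', Finset.mem_univ, if_true, Nat.cast_one, one_mul]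
  field_simp

lemma Aw_single_add_single {a b : Fin k} (hab : a ≠ b) (p q : ℕ) :
    Aw ω (Pi.single a p + Pi.single b q) =
      (p + q).choose p * (p * ω a + q * ω b) / (p + q) := by
  have hmult : Nat.multinomial Finset.univ (Pi.single a p + Pi.single b q) = (p + q).choose p := by
    rw [← Nat.multinomial_congr_of_sdiff (s := {a, b}) (Finset.subset_univ _) _ (fun _ _ => rfl),
      Nat.binomial_eq_choose hab]
    · simp [hab, hab.symm]
    · intro c hc
      simp only [Finset.mem_sdiff, Finset.mem_insert, Finset.mem_singleton, not_or] at hc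
      simp [hc.2.1, hc.2.2]
  simp [Aw, hmult, Pi.single_apply, Finset.sum_add_distrib, add_mul]

end WeightCoefficient

section Operator

variable {k : ℕ} (hk : 2 ≤ k) (m : ℝ) (P : MvPolynomial (Fin k) ℝ)

lemma coeff_zero_Tm :
    coeff 0 (Tm k hk m P) = 2 * coeff (Finsupp.single ⟨0, by omega⟩ 2) P
      - m * coeff (Finsupp.single ⟨1, by omega⟩ 1) P := by
  have hX : ∀ j, coeff 0 (X j * pderiv ⟨1, by omega⟩ (pderiv j P)) = 0 := fun j => by
    simp [coeff_X_mul']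
  simp only [Tm, coeff_sub, coeff_C_mul, coeff_sum, hX, Finset.sum_const_zero, coeff_pderiv,
    zero_add, ← Finsupp.single_add]
  simp only [Finsupp.single_eq_same, Finsupp.coe_zero, Pi.zero_apply]
  push_cast
  ring

lemma coeff_single_one_Tm (i : Fin k) :
    coeff (Finsupp.single i 1) (Tm k hk m P) =
      (if i = ⟨0, by omega⟩ then 6 else 2) *
          coeff (Finsupp.single i 1 + Finsupp.single ⟨0, by omega⟩ 2) P
        - (1 + m) * (if i = ⟨1, by omega⟩ then 2 else 1) *
          coeff (Finsupp.single i 1 + Finsupp.single ⟨1, by omega⟩ 1) P := by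
  have hX : ∀ j, coeff (Finsupp.single i 1) (X j * pderiv ⟨1, by omega⟩ (pderiv j P)) =
      if j = i then coeff 0 (pderiv ⟨1, by omega⟩ (pderiv i P)) else 0 := fun j => by
    rcases eq_or_ne j i with rfl | hj
    · simp [coeff_X_mul']
    · simp [coeff_X_mul', hj]
  simp only [Tm, coeff_sub, coeff_C_mul, coeff_sum, hX, Finset.sum_ite_eq', Finset.mem_univ,
    if_true, coeff_pderiv, zero_add, add_assoc, ← Finsupp.single_add]
  rw [add_comm (Finsupp.single _ 1) (Finsupp.single i 1), one_add_one_eq_two]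
  have h01 : (⟨0, by omega⟩ : Fin k) ≠ ⟨1, by omega⟩ := by simp
  by_cases h0 : i = ⟨0, by omega⟩
  · subst h0
    simp only [Finsupp.coe_add, Pi.add_apply, Finsupp.single_apply, h01, h01.symm, if_true,
      if_false, Finsupp.coe_zero, Pi.zero_apply]
    push_cast
    ring
  by_cases h1 : i = ⟨1, by omega⟩
  · subst h1
    simp only [Finsupp.coe_add, Pi.add_apply, Finsupp.single_apply, h01.symm, if_true,
      if_false, Finsupp.coe_zero, Pi.zero_apply]
    push_cast
    ring
  · simp only [Finsupp.coe_add, Pi.add_apply, Finsupp.single_apply, h0, h1, Ne.symm h1,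
      if_true, if_false, Finsupp.coe_zero, Pi.zero_apply]
    push_cast
    ring

end Operator

section WIPCoefficients

variable {k : ℕ} (ω : Fin k → ℝ)

lemma coeff_single_WIP (a : Fin k) {p n : ℕ} (hp : p ≠ 0) (hn : (a.1 + 1) * p = n) :
    coeff (Finsupp.single a p) (WIP k n ω) = ω a := by
  rw [coeff_WIP_of_isoDeg_eq, Finsupp.single_eq_pi_single, Aw_single ω a hp]
  rwa [Finsupp.single_eq_pi_single, isoDeg_single]

lemma coeff_single_add_single_WIP {a b : Fin k} (hab : a ≠ b) {p q n : ℕ}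
    (hn : (a.1 + 1) * p + (b.1 + 1) * q = n) :
    coeff (Finsupp.single a p + Finsupp.single b q) (WIP k n ω) =
      (p + q).choose p * (p * ω a + q * ω b) / (p + q) := by
  rw [coeff_WIP_of_isoDeg_eq, Finsupp.coe_add, Finsupp.single_eq_pi_single,
    Finsupp.single_eq_pi_single, Aw_single_add_single ω hab]
  rwa [Finsupp.coe_add, Finsupp.single_eq_pi_single, Finsupp.single_eq_pi_single, isoDeg_add,
    isoDeg_single, isoDeg_single]

variable (hk : 2 ≤ k) (m : ℝ)

lemma coeff_zero_Tm_WIP_two :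
    coeff 0 (Tm k hk m (WIP k 2 ω)) = 2 * ω ⟨0, by omega⟩ - m * ω ⟨1, by omega⟩ := by
  rw [coeff_zero_Tm, coeff_single_WIP ω _ two_ne_zero (n := 2) rfl,
    coeff_single_WIP ω _ one_ne_zero (n := 2) rfl]

lemma coeff_single_zero_Tm_WIP_three :
    coeff (Finsupp.single ⟨0, by omega⟩ 1) (Tm k hk m (WIP k 3 ω)) =
      6 * ω ⟨0, by omega⟩ - (1 + m) * (ω ⟨0, by omega⟩ + ω ⟨1, by omega⟩) := by
  have h01 : (⟨0, by omega⟩ : Fin k) ≠ ⟨1, by omega⟩ := by simp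
  rw [coeff_single_one_Tm, if_pos rfl, if_neg h01, ← Finsupp.single_add,
    coeff_single_WIP ω _ (p := 1 + 2) three_ne_zero (n := 3) rfl,
    coeff_single_add_single_WIP ω h01 (n := 3) rfl]
  norm_num

lemma coeff_single_Tm_WIP (i : Fin k) (hi : 2 ≤ i.1) :
    coeff (Finsupp.single i 1) (Tm k hk m (WIP k (i.1 + 3) ω)) =
      2 * (ω i + 2 * ω ⟨0, by omega⟩) - (1 + m) * (ω i + ω ⟨1, by omega⟩) := by
  have hi0 : i ≠ ⟨0, by omega⟩ := fun h => by simp [h] at hi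
  have hi1 : i ≠ ⟨1, by omega⟩ := fun h => by simp [h] at hi
  rw [coeff_single_one_Tm, if_neg hi0, if_neg hi1, coeff_single_add_single_WIP ω hi0 (by simp),
    coeff_single_add_single_WIP ω hi1 (by simp)]
  norm_num

end WIPCoefficients

/-- The kernel of `T_m` on the WIP-module is zero when `m ∉ {1, 2}`. -/
theorem ker_Tm_trivial (k : ℕ) (hk : 3 ≤ k) (m : ℝ) (hm1 : m ≠ 1) (hm2 : m ≠ 2)
    (ω : Fin k → ℝ) (h : ∀ n, 1 ≤ n → Tm k (by omega) m (WIP k n ω) = 0) :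
    ω = 0 := by
  have hk2 : 2 ≤ k := by omega
  have hA := coeff_zero_Tm_WIP_two ω hk2 m
  have hB := coeff_single_zero_Tm_WIP_three ω hk2 m
  rw [h 2 (by norm_num), coeff_zero] at hA
  rw [h 3 (by norm_num), coeff_zero] at hB
  have hω₀ : ω ⟨0, by omega⟩ = 0 := by
    have : (m - 1) * (m - 2) * ω ⟨0, by omega⟩ = 0 := by
      linear_combination -(1 + m) * hA + m * hB
    simpa [sub_ne_zero.2 hm1, sub_ne_zero.2 hm2] using this
  have hω₁ : ω ⟨1, by omega⟩ = 0 := by linear_combination -hA + hB + (3 - m) * hω₀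
  funext i
  obtain ⟨_ | _ | j, hj⟩ := i
  · exact hω₀
  · exact hω₁
  have hC := coeff_single_Tm_WIP ω hk2 m ⟨j + 2, hj⟩ (by simp)
  rw [h _ (by omega), coeff_zero] at hC
  have : (1 - m) * ω ⟨j + 2, hj⟩ = 0 := by linear_combination -hC - 4 * hω₀ + (1 + m) * hω₁
  simpa [sub_ne_zero.2 hm1.symm] using this
end
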